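/- Let F : ℝ^n → ℝ^m be continuously differentiable, B a symmetric positive definite n×n real matrix, x ∈ ℝ^n, and suppose each F_i is L_i-smooth and μ_i-strongly convex relative to ‖·‖_B with 0 < μ_i ≤ L_i. Let α_1,…,α_m satisfy μ_i ≤ α_i ≤ L_i, let d ≠ 0 be the unique minimizer over ℝ^n of d ↦ max_{i∈{1,…,m}} ⟨∇F_i(x), d⟩/α_i + (1/2)‖d‖_B², and let σ ∈ (0, 1/2], γ ∈ (0,1). Suppose t ∈ (0,1] satisfies the Armijo condition at x in direction d, and either t = 1 or there exists an index i with F_i(x + (t/γ) d) − F_i(x) > σ (t/γ) ⟨∇F_i(x), d⟩. Then min{1, min_{i∈{1,…,m}} 2γ(1−σ)μ_i/L_i} ≤ t ≤ 1. -/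

import Mathlib

/-!
Scaling the subproblem minimizer `d` by `s > 0` multiplies the max-term by `s` and the quadratic
term by `s²`, so `s = 1` minimizes `s ↦ s M + s² ‖d‖_B² / 2`, where `M` is the max-term at `d`;
stationarity gives `M = -‖d‖_B²`, hence `⟪∇F_i x, d⟫ ≤ α_i M ≤ -μ_i ‖d‖_B²`. If the Armijo
condition fails at the stepsize `s = t/γ` for the index `i`, the `L_i`-smoothness upper bound along
`d` forces `(1 - σ) μ_i ‖d‖_B² < L_i s ‖d‖_B² / 2`, that is `s > 2 (1 - σ) μ_i / L_i`.
-/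

open scoped RealInnerProductSpace

noncomputable def fmax {m : ℕ} [NeZero m] (f : Fin m → ℝ) : ℝ :=
  Finset.univ.sup' Finset.univ_nonempty f

noncomputable def fmin {m : ℕ} [NeZero m] (f : Fin m → ℝ) : ℝ :=
  Finset.univ.inf' Finset.univ_nonempty f

section

variable {m : ℕ} [NeZero m]

lemma le_fmax (f : Fin m → ℝ) (i : Fin m) : f i ≤ fmax f :=
  Finset.le_sup' f (Finset.mem_univ i)

lemma fmin_le (f : Fin m → ℝ) (i : Fin m) : fmin f ≤ f i :=
  Finset.inf'_le f (Finset.mem_univ i)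

lemma fmax_const_mul {c : ℝ} (hc : 0 ≤ c) (f : Fin m → ℝ) :
    fmax (fun i => c * f i) = c * fmax f :=
  (Finset.mul₀_sup' hc f _ _).symm

lemma eq_neg_of_forall_pos_le_quadratic {a K : ℝ}
    (h : ∀ s > 0, a + K / 2 ≤ s * a + s ^ 2 * K / 2) : a = -K := by
  have hmin : IsLocalMin (fun s : ℝ => s * a + s ^ 2 * K / 2) 1 :=
    Filter.mem_of_superset (Ioi_mem_nhds one_pos) fun s hs => by simpa using h s hs
  have hderiv : HasDerivAt (fun s : ℝ => s * a + s ^ 2 * K / 2) (a + K) 1 := by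
    have := (hasDerivAt_mul_const (x := (1 : ℝ)) a).add
      (((hasDerivAt_pow 2 (1 : ℝ)).mul_const K).div_const 2)
    norm_num at this
    exact this
  linarith [hmin.hasDerivAt_eq_zero hderiv]

section Subproblem

variable {E : Type*} [NormedAddCommGroup E] [InnerProductSpace ℝ E]

lemma fmax_inner_div_eq_neg_of_isMin (g : Fin m → E) (α : Fin m → ℝ) (B : E →ₗ[ℝ] E) (d : E)
    (hdmin : ∀ e : E, (fmax fun i => ⟪g i, d⟫ / α i) + ⟪d, B d⟫ / 2 ≤
      (fmax fun i => ⟪g i, e⟫ / α i) + ⟪e, B e⟫ / 2) :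
    (fmax fun i => ⟪g i, d⟫ / α i) = -⟪d, B d⟫ := by
  refine eq_neg_of_forall_pos_le_quadratic fun s hs => ?_
  have hscale : (fmax fun i => ⟪g i, s • d⟫ / α i) = s * fmax fun i => ⟪g i, d⟫ / α i := by
    rw [← fmax_const_mul hs.le]
    simp only [real_inner_smul_right, mul_div_assoc]
  have hquad : ⟪s • d, B (s • d)⟫ = s ^ 2 * ⟪d, B d⟫ := by
    rw [map_smul, real_inner_smul_left, real_inner_smul_right]
    ring
  have := hdmin (s • d)
  rw [hscale, hquad] at this
  linarith

end Subproblem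

lemma lt_of_armijo_fails_of_smooth {g K L μ σ s : ℝ} (hK : 0 ≤ K) (hL : 0 < L) (hσ : σ ≤ 1)
    (hs : 0 < s) (hg : g ≤ -(μ * K)) (hfail : σ * s * g < s * g + L / 2 * (s ^ 2 * K)) :
    2 * (1 - σ) * μ / L < s := by
  have hdecrease : (2 * (1 - σ) * μ - L * s) * K * s < 0 := by
    nlinarith [mul_le_mul_of_nonneg_left hg (mul_nonneg (sub_nonneg.mpr hσ) hs.le)]
  have := neg_of_mul_neg_left (neg_of_mul_neg_left hdecrease hs.le) hK
  rw [div_lt_iff₀ hL]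
  linarith

end

theorem stmt11_general {n m : ℕ} [NeZero m] (F : Fin m → EuclideanSpace ℝ (Fin n) → ℝ)
    (B : EuclideanSpace ℝ (Fin n) →ₗ[ℝ] EuclideanSpace ℝ (Fin n))
    (hposdef : ∀ u : EuclideanSpace ℝ (Fin n), u ≠ 0 → 0 < ⟪u, B u⟫)
    (x : EuclideanSpace ℝ (Fin n))
    (L μ : Fin m → ℝ) (hμ : ∀ i, 0 < μ i) (hμL : ∀ i, μ i ≤ L i)
    (hsmooth : ∀ i, ∀ y z : EuclideanSpace ℝ (Fin n),
      F i z ≤ F i y + ⟪gradient (F i) y, z - y⟫ + L i / 2 * ⟪z - y, B (z - y)⟫)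
    (α : Fin m → ℝ) (hα : ∀ i, μ i ≤ α i ∧ α i ≤ L i)
    (d : EuclideanSpace ℝ (Fin n))
    (hdmin : ∀ e : EuclideanSpace ℝ (Fin n),
      (fmax fun i => ⟪gradient (F i) x, d⟫ / α i) + ⟪d, B d⟫ / 2 ≤
        (fmax fun i => ⟪gradient (F i) x, e⟫ / α i) + ⟪e, B e⟫ / 2)
    (σ γ : ℝ) (hσ : σ ∈ Set.Ioc (0 : ℝ) (1 / 2)) (hγ : γ ∈ Set.Ioo (0 : ℝ) 1)
    (t : ℝ) (ht : t ∈ Set.Ioc (0 : ℝ) 1)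
    (hmaximal : t = 1 ∨ ∃ i, σ * (t / γ) * ⟪gradient (F i) x, d⟫ <
      F i (x + (t / γ) • d) - F i x) :
    min 1 (fmin fun i => 2 * γ * (1 - σ) * μ i / L i) ≤ t ∧ t ≤ 1 := by
  refine ⟨?_, ht.2⟩
  rcases hmaximal with rfl | ⟨i, hfail⟩
  · exact min_le_left _ _
  have hK : 0 ≤ ⟪d, B d⟫ := by
    rcases eq_or_ne d 0 with rfl | hd
    · simp
    · exact (hposdef d hd).le
  have hα_pos : 0 < α i := (hμ i).trans_le (hα i).1
  have hdescent : ⟪gradient (F i) x, d⟫ ≤ -(μ i * ⟪d, B d⟫) := by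
    have := le_fmax (fun j => ⟪gradient (F j) x, d⟫ / α j) i
    rw [fmax_inner_div_eq_neg_of_isMin _ α B d hdmin, div_le_iff₀ hα_pos] at this
    linarith [mul_le_mul_of_nonneg_right (hα i).1 hK]
  have hstep : 2 * (1 - σ) * μ i / L i < t / γ := by
    refine lt_of_armijo_fails_of_smooth hK ((hμ i).trans_le (hμL i)) (by linarith [hσ.2])
      (div_pos ht.1 hγ.1) hdescent ?_
    have hsmooth_d := hsmooth i x (x + (t / γ) • d)
    rw [add_sub_cancel_left, map_smul, real_inner_smul_left, real_inner_smul_right,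
      real_inner_smul_right] at hsmooth_d
    linarith
  calc min 1 (fmin fun i => 2 * γ * (1 - σ) * μ i / L i)
      ≤ 2 * γ * (1 - σ) * μ i / L i := (min_le_right _ _).trans (fmin_le _ i)
    _ = γ * (2 * (1 - σ) * μ i / L i) := by ring
    _ ≤ t := by
      rw [lt_div_iff₀ hγ.1] at hstep
      linarith

/-- Bounds for the Armijo stepsize along the Barzilai–Borwein descent
direction with variable metric: if `μ_i ≤ α_i ≤ L_i`, `d ≠ 0` is the minimizer of the
subproblem, `t ∈ (0,1]` satisfies the Armijo condition and either `t = 1` or the Armijo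
condition fails at stepsize `t/γ` for some index, then
`min{1, min_i 2γ(1−σ)μ_i/L_i} ≤ t ≤ 1`. -/
theorem stmt11 {n m : ℕ} [NeZero m] (F : Fin m → EuclideanSpace ℝ (Fin n) → ℝ)
    (hF : ∀ i, ContDiff ℝ 1 (F i))
    (B : EuclideanSpace ℝ (Fin n) →ₗ[ℝ] EuclideanSpace ℝ (Fin n))
    (hsym : ∀ u v : EuclideanSpace ℝ (Fin n), ⟪B u, v⟫ = ⟪u, B v⟫)
    (hposdef : ∀ u : EuclideanSpace ℝ (Fin n), u ≠ 0 → 0 < ⟪u, B u⟫)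
    (x : EuclideanSpace ℝ (Fin n))
    (L μ : Fin m → ℝ) (hμ : ∀ i, 0 < μ i) (hμL : ∀ i, μ i ≤ L i)
    (hsmooth : ∀ i, ∀ y z : EuclideanSpace ℝ (Fin n),
      F i z ≤ F i y + ⟪gradient (F i) y, z - y⟫ + L i / 2 * ⟪z - y, B (z - y)⟫)
    (hsc : ∀ i, ∀ y z : EuclideanSpace ℝ (Fin n),
      F i y + ⟪gradient (F i) y, z - y⟫ + μ i / 2 * ⟪z - y, B (z - y)⟫ ≤ F i z)
    (α : Fin m → ℝ) (hα : ∀ i, μ i ≤ α i ∧ α i ≤ L i)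
    (d : EuclideanSpace ℝ (Fin n)) (hd : d ≠ 0)
    (hdmin : ∀ e : EuclideanSpace ℝ (Fin n),
      (fmax fun i => ⟪gradient (F i) x, d⟫ / α i) + ⟪d, B d⟫ / 2 ≤
        (fmax fun i => ⟪gradient (F i) x, e⟫ / α i) + ⟪e, B e⟫ / 2)
    (σ γ : ℝ) (hσ : σ ∈ Set.Ioc (0 : ℝ) (1 / 2)) (hγ : γ ∈ Set.Ioo (0 : ℝ) 1)
    (t : ℝ) (ht : t ∈ Set.Ioc (0 : ℝ) 1)
    (harmijo : ∀ i, F i (x + t • d) - F i x ≤ σ * t * ⟪gradient (F i) x, d⟫)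
    (hmaximal : t = 1 ∨ ∃ i, σ * (t / γ) * ⟪gradient (F i) x, d⟫ <
      F i (x + (t / γ) • d) - F i x) :
    min 1 (fmin fun i => 2 * γ * (1 - σ) * μ i / L i) ≤ t ∧ t ≤ 1 :=
  stmt11_general F B hposdef x L μ hμ hμL hsmooth α hα d hdmin σ γ hσ hγ t ht hmaximal
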